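/- Let d ≥ 2 and let S, T ⊆ Z_d with |S| + |T| ≤ d. Define H(S,T) as the set of ψ ∈ C^d whose standard-basis support is contained in S and whose Fourier support is contained in T. If d is prime, then H(S,T) = {0}. -/

import Mathlib

open Complex Finset
open scoped Classical

noncomputable def dftOmega (d : ℕ) : ℂ := Complex.exp (2 * Real.pi * Complex.I / d)

/-- The j-th Fourier basis vector of `ℂ^d`, with i-th entry `ω^{ij}/√d`. -/
noncomputable def fourierVec (d : ℕ) (j : Fin d) : Fin d → ℂ :=
  fun i => dftOmega d ^ ((i : ℕ) * (j : ℕ)) / Real.sqrt d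

/-- The j-th Fourier coefficient `⟨f_j, ψ⟩ = (1/√d)∑_i ω^{−ij} ψ(i)`. -/
noncomputable def dftCoeff (d : ℕ) (ψ : Fin d → ℂ) (j : Fin d) : ℂ :=
  ∑ i, (starRingEnd ℂ) (fourierVec d j i) * ψ i

/-- Number of nonzero standard-basis coordinates of ψ. -/
noncomputable def nA (d : ℕ) (ψ : Fin d → ℂ) : ℕ :=
  (Finset.univ.filter fun i => ψ i ≠ 0).card

/-- Number of nonzero Fourier coefficients of ψ. -/
noncomputable def nB (d : ℕ) (ψ : Fin d → ℂ) : ℕ :=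
  (Finset.univ.filter fun j => dftCoeff d ψ j ≠ 0).card

/-- Kirkwood-Dirac distribution `Q_{ij} = ⟨e_i,ψ⟩⟨ψ,f_j⟩⟨f_j,e_i⟩` of ψ with
respect to the standard basis and the Fourier basis. -/
noncomputable def KD (d : ℕ) (ψ : Fin d → ℂ) (i j : Fin d) : ℂ :=
  ψ i * (∑ k, (starRingEnd ℂ) (ψ k) * fourierVec d j k) * (starRingEnd ℂ) (fourierVec d j i)

/-!
Chebotarëv's theorem: every square minor `(ζ ^ (a i * b j))` of the DFT matrix of prime order `p`
is invertible. Replace `ζ` by `X` and write `X ^ (a * b) = ((X - 1) * g + 1) ^ b` with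
`g = 1 + X + ⋯ + X ^ (a - 1)`. Expanding binomially and multilinearly, the determinant is
`(X - 1) ^ (n(n-1)/2) * Q`, where `Q(1)` is the product of the Vandermonde determinant of the `a i`
and of the determinant of `(b j).choose k`; both are nonzero mod `p` because the `a i`, resp. the
`b j`, are distinct mod `p`. If the minor vanished at `ζ`, then `Q(ζ) = 0`, so the cyclotomic
polynomial `Φ_p` divides `Q` and `p = Φ_p(1)` divides `Q(1)`.

A vector supported on `S` whose Fourier transform vanishes on `|S|` frequencies is then in the
kernel of such a minor.
-/

open Matrix Polynomial

theorem Finset.sum_range_card_le_sum (s : Finset ℕ) : ∑ i ∈ range #s, i ≤ ∑ i ∈ s, i := by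
  induction s using Finset.induction_on_max with
  | empty => simp
  | insert a s ha ih =>
    have ha' : a ∉ s := fun h => (ha a h).false
    have hcard : #s ≤ a := by simpa using card_le_card fun x hx => mem_range.2 (ha x hx)
    rw [card_insert_of_notMem ha', sum_range_succ, sum_insert ha']
    omega

theorem Finset.eq_range_card_of_sum_le {s : Finset ℕ} (h : ∑ i ∈ s, i ≤ ∑ i ∈ range #s, i) :
    s = range #s := by
  induction s using Finset.induction_on_max with
  | empty => simp
  | insert a s ha ih =>
    have ha' : a ∉ s := fun h => (ha a h).false
    have hcard : #s ≤ a := by simpa using card_le_card fun x hx => mem_range.2 (ha x hx)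
    have hs := s.sum_range_card_le_sum
    rw [card_insert_of_notMem ha', sum_range_succ, sum_insert ha'] at h
    rw [card_insert_of_notMem ha', range_add_one, ih (by omega), card_range, show a = #s by omega]

theorem Fin.sum_range_le_sum_of_injective {n : ℕ} {r : Fin n → ℕ} (hr : Function.Injective r) :
    ∑ i ∈ range n, i ≤ ∑ i, r i := by
  simpa [sum_image hr.injOn, card_image_of_injective _ hr] using
    (univ.image r).sum_range_card_le_sum

theorem Fin.sum_le_sum_range_iff_of_injective {n : ℕ} {r : Fin n → ℕ}
    (hr : Function.Injective r) : ∑ i, r i ≤ ∑ i ∈ range n, i ↔ ∀ i, r i < n := by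
  have hcard : #(univ.image r) = n := by simp [card_image_of_injective _ hr]
  have hsum : ∑ i ∈ univ.image r, i = ∑ i, r i := sum_image hr.injOn
  constructor
  · intro h i
    have hrange := eq_range_card_of_sum_le (s := univ.image r) (by rwa [hsum, hcard])
    simpa [hcard] using hrange.le (mem_image_of_mem r (mem_univ i))
  · intro h
    have hrange : univ.image r = range n :=
      eq_of_subset_of_card_le (by simpa [subset_iff] using h) (by simp [hcard])
    rw [← hsum, hrange]

theorem add_one_pow_eq_sum_range_choose {R : Type*} [CommSemiring R] (x : R) {b N : ℕ}
    (hb : b < N) : (x + 1) ^ b = ∑ k ∈ range N, x ^ k * b.choose k := by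
  rw [add_pow]
  refine sum_subset (range_subset_range.2 hb) (fun k _ hk => ?_) |>.trans
    (sum_congr rfl fun k _ => by rw [one_pow, mul_one])
  rw [Nat.choose_eq_zero_of_lt (by simpa using hk), Nat.cast_zero, mul_zero]

section Determinants

variable {R : Type*} [CommRing R]

theorem Matrix.det_of_sum_mul {ι n : Type*} [Fintype n] [DecidableEq n] [DecidableEq ι]
    (s : Finset ι) (v : n → ι → R) (w : ι → n → R) :
    (of fun i j => ∑ k ∈ s, v i k * w k j).det =
      ∑ r ∈ Fintype.piFinset fun _ => s, (∏ i, v i (r i)) * (of fun i j => w (r i) j).det := by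
  have hrows : (of fun i j => ∑ k ∈ s, v i k * w k j) = fun i => ∑ k ∈ s, v i k • w k := by
    ext i j
    simp
  rw [hrows]
  exact ((detRowAlternating : (n → R) [⋀^n]→ₗ[R] R).toMultilinearMap.map_sum_finset _ _).trans
    (sum_congr rfl fun r _ => MultilinearMap.map_smul_univ _ _ _)

theorem Matrix.exists_det_eq_pow_mul (t : R) {n m : ℕ} (g : Fin n → R) (c : ℕ → Fin n → R)
    (hnm : n ≤ m) :
    ∃ Q, (of fun i j => ∑ k ∈ range m, (t * g i) ^ k * c k j).det = t ^ (∑ i ∈ range n, i) * Q ∧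
      t ∣ Q - (vandermonde g).det * (of fun k j : Fin n => c k j).det := by
  set K := ∑ i ∈ range n, i
  set Y : (Fin n → ℕ) → R := fun r => (∏ i, g i ^ r i) * (of fun i j => c (r i) j).det
  have hY : ∀ r, Y r ≠ 0 → Function.Injective r := by
    intro r hr i i' hii'
    by_contra hne
    have hdet : (of fun i j => c (r i) j).det = 0 := det_zero_of_row_eq hne (by ext j; simp [hii'])
    exact hr (by simp only [Y, hdet, mul_zero])
  have hexp : (of fun i j => ∑ k ∈ range m, (t * g i) ^ k * c k j).det =
      ∑ r ∈ Fintype.piFinset fun _ => range m, t ^ (∑ i, r i) * Y r := by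
    rw [det_of_sum_mul]
    refine sum_congr rfl fun r _ => ?_
    simp only [Y, mul_pow, prod_mul_distrib, prod_pow_eq_pow_sum, mul_assoc]
  have hlead : (vandermonde g).det * (of fun k j : Fin n => c k j).det =
      ∑ r ∈ Fintype.piFinset fun _ => range n, Y r := by
    rw [← det_mul, ← det_of_sum_mul]
    congr 1
    ext i j
    simp [mul_apply, Fin.sum_univ_eq_sum_range (fun k => g i ^ k * c k j)]
  refine ⟨∑ r ∈ Fintype.piFinset fun _ => range m, t ^ (∑ i, r i - K) * Y r, ?_, ?_⟩
  · rw [hexp, mul_sum]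
    refine sum_congr rfl fun r _ => ?_
    by_cases h : Y r = 0
    · simp [h]
    · rw [← mul_assoc (t ^ K), ← pow_add,
        Nat.add_sub_cancel' (Fin.sum_range_le_sum_of_injective (hY r h))]
  · have hsub : (Fintype.piFinset fun _ : Fin n => range n) ⊆
        Fintype.piFinset fun _ => range m :=
      Fintype.piFinset_subset _ _ fun _ => range_subset_range.2 hnm
    rw [hlead, ← inter_eq_right.2 hsub, ← sum_ite_mem, ← sum_sub_distrib]
    refine dvd_sum fun r _ => ?_
    by_cases h : Y r = 0
    · simp [h]
    have hlow : ∑ i, r i - K = 0 ↔ r ∈ Fintype.piFinset fun _ => range n := by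
      simpa [Nat.sub_eq_zero_iff_le] using Fin.sum_le_sum_range_iff_of_injective (hY r h)
    by_cases hr : r ∈ Fintype.piFinset fun _ => range n
    · simp [hr, hlow.2 hr]
    · obtain ⟨e, he⟩ := Nat.exists_eq_succ_of_ne_zero (mt hlow.1 hr)
      rw [if_neg hr, sub_zero, he, pow_succ', mul_assoc]
      exact dvd_mul_right _ _

theorem Matrix.det_vandermonde_natCast [IsDomain R] {n : ℕ} (v : Fin n → ℕ) :
    (vandermonde fun i => (v i : R)).det =
      (∏ i : Fin n, ((i : ℕ).factorial : R)) *
        (of fun i j : Fin n => ((v i).choose j : R)).det := by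
  rw [det_eval_matrixOfPolynomials_eq_det_vandermonde _ (fun i => descPochhammer R i)
    (fun i => descPochhammer_natDegree R i) (fun i => monic_descPochhammer R i), ← det_mul_row]
  congr 1
  ext i j
  simp [descPochhammer_eval_eq_descFactorial, Nat.descFactorial_eq_factorial_mul_choose]

end Determinants

section ZMod

variable {p n : ℕ} [Fact p.Prime]

theorem ZMod.det_vandermonde_finVal_ne_zero {a : Fin n → Fin p} (ha : Function.Injective a) :
    (vandermonde fun i => ((a i : ℕ) : ZMod p)).det ≠ 0 := by
  refine det_vandermonde_ne_zero_iff.2 fun i j hij => ha (Fin.ext ?_)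
  simpa [ZMod.val_cast_of_lt (a i).2, ZMod.val_cast_of_lt (a j).2] using congrArg ZMod.val hij

theorem ZMod.det_choose_finVal_ne_zero {b : Fin n → Fin p} (hb : Function.Injective b) :
    (of fun i j : Fin n => ((b i : ℕ).choose j : ZMod p)).det ≠ 0 := by
  have h := det_vandermonde_finVal_ne_zero hb
  rw [det_vandermonde_natCast fun i => (b i : ℕ)] at h
  exact right_ne_zero_of_mul h

end ZMod

theorem IsPrimitiveRoot.aeval_one_eq_zero {K : Type*} [Field K] [CharZero K] {p : ℕ}
    [Fact p.Prime] {ζ : K} (hζ : IsPrimitiveRoot ζ p) {Q : ℤ[X]} (hQ : aeval ζ Q = 0) :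
    aeval (1 : ZMod p) Q = 0 := by
  have hp := (Fact.out : p.Prime).pos
  obtain ⟨R, rfl⟩ : cyclotomic p ℤ ∣ Q := by
    rw [cyclotomic_eq_minpoly hζ hp]
    exact minpoly.isIntegrallyClosed_dvd (hζ.isIntegral hp) hQ
  rw [map_mul, aeval_def, eval₂_eq_eval_map, map_cyclotomic, eval_one_cyclotomic_prime,
    ZMod.natCast_self, zero_mul]

theorem exists_det_X_pow_mul_eq_X_sub_one_pow_mul {p n : ℕ} [Fact p.Prime] {a b : Fin n → Fin p}
    (ha : Function.Injective a) (hb : Function.Injective b) :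
    ∃ Q : ℤ[X], (of fun i j => (X : ℤ[X]) ^ ((a i : ℕ) * (b j : ℕ))).det =
      (X - 1) ^ (∑ i ∈ range n, i) * Q ∧ aeval (1 : ZMod p) Q ≠ 0 := by
  set g : Fin n → ℤ[X] := fun i => ∑ k ∈ range (a i), X ^ k
  obtain ⟨Q, hdet, R, hR⟩ := exists_det_eq_pow_mul (X - 1) g
    (fun k j => ((b j : ℕ).choose k : ℤ[X])) (by simpa using Fintype.card_le_of_injective a ha)
  have hentries : (of fun i j => ∑ k ∈ range p, ((X - 1) * g i) ^ k * ((b j : ℕ).choose k : ℤ[X])) =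
      of fun i j => (X : ℤ[X]) ^ ((a i : ℕ) * (b j : ℕ)) := by
    ext i j
    rw [of_apply, of_apply, mul_geom_sum, ← add_one_pow_eq_sum_range_choose _ (b j).2,
      sub_add_cancel, pow_mul]
  have hvdm : (aeval (1 : ZMod p)).mapMatrix (vandermonde g) =
      vandermonde fun i => ((a i : ℕ) : ZMod p) := by
    ext i j
    simp [g]
  have hchoose : (aeval (1 : ZMod p)).mapMatrix
      (of fun k j : Fin n => ((b j : ℕ).choose k : ℤ[X])) =
      (of fun i j : Fin n => ((b i : ℕ).choose j : ZMod p))ᵀ := by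
    ext i j
    simp
  refine ⟨Q, hentries ▸ hdet, fun hQ1 => ?_⟩
  have := congrArg (aeval (1 : ZMod p)) hR
  rw [map_sub, hQ1, map_mul, map_mul, AlgHom.map_det, AlgHom.map_det, hvdm, hchoose,
    det_transpose] at this
  simp only [map_sub, aeval_X, map_one, sub_self, zero_mul, zero_sub, neg_eq_zero] at this
  exact mul_ne_zero (ZMod.det_vandermonde_finVal_ne_zero ha)
    (ZMod.det_choose_finVal_ne_zero hb) this

theorem IsPrimitiveRoot.det_pow_mul_ne_zero {K : Type*} [Field K] [CharZero K] {p : ℕ}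
    (hp : p.Prime) {ζ : K} (hζ : IsPrimitiveRoot ζ p) {n : ℕ} {a b : Fin n → Fin p}
    (ha : Function.Injective a) (hb : Function.Injective b) :
    (of fun i j => ζ ^ ((a i : ℕ) * (b j : ℕ))).det ≠ 0 := by
  have := Fact.mk hp
  obtain ⟨Q, hdet, hQ1⟩ := exists_det_X_pow_mul_eq_X_sub_one_pow_mul ha hb
  have hmap : (aeval ζ).mapMatrix (of fun i j => (X : ℤ[X]) ^ ((a i : ℕ) * (b j : ℕ))) =
      of fun i j => ζ ^ ((a i : ℕ) * (b j : ℕ)) := by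
    ext i j
    simp
  have hζ1 : aeval ζ (X - 1 : ℤ[X]) ≠ 0 := by
    simpa [sub_eq_zero] using hζ.ne_one hp.one_lt
  rw [← hmap, ← AlgHom.map_det, hdet, map_mul, map_pow]
  exact mul_ne_zero (pow_ne_zero _ hζ1) fun hQζ => hQ1 (hζ.aeval_one_eq_zero hQζ)

theorem IsPrimitiveRoot.eq_zero_of_sum_pow_mul_eq_zero {K : Type*} [Field K] [CharZero K] {p : ℕ}
    (hp : p.Prime) {ζ : K} (hζ : IsPrimitiveRoot ζ p) {S T : Finset (Fin p)} (hST : #S ≤ #T)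
    {v : Fin p → K} (hS : ∀ i ∉ S, v i = 0)
    (hT : ∀ j ∈ T, ∑ i : Fin p, ζ ^ ((i : ℕ) * (j : ℕ)) * v i = 0) :
    v = 0 := by
  obtain ⟨T', hT'T, hT'⟩ := exists_subset_card_eq hST
  set a := S.orderEmbOfFin rfl
  set b := T'.orderEmbOfFin hT'
  have hmul : (of fun i j => ζ ^ ((b i : ℕ) * (a j : ℕ))) *ᵥ (v ∘ a) = 0 := by
    ext i
    rw [mulVec, dotProduct, Pi.zero_apply, ← hT (b i) (hT'T (T'.orderEmbOfFin_mem hT' i))]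
    refine Fintype.sum_of_injective a a.injective _ _ (fun x hx => ?_) fun j => ?_
    · rw [hS x (by simpa [a, range_orderEmbOfFin] using hx), mul_zero]
    · simp [mul_comm]
  have hva := eq_zero_of_mulVec_eq_zero (hζ.det_pow_mul_ne_zero hp b.injective a.injective) hmul
  ext x
  by_cases hx : x ∈ S
  · obtain ⟨j, rfl⟩ : x ∈ Set.range a := by simpa [a, range_orderEmbOfFin] using hx
    exact congrFun hva j
  · exact hS x hx

theorem conj_dftOmega (d : ℕ) : starRingEnd ℂ (dftOmega d) = (dftOmega d)⁻¹ := by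
  rw [dftOmega, ← Complex.exp_conj, ← Complex.exp_neg]
  congr 1
  simp only [map_div₀, map_mul, conj_I, conj_ofReal, map_ofNat, conj_natCast]
  ring

theorem dftCoeff_eq (d : ℕ) (ψ : Fin d → ℂ) (j : Fin d) :
    dftCoeff d ψ j = (∑ i : Fin d, (dftOmega d)⁻¹ ^ ((i : ℕ) * (j : ℕ)) * ψ i) / Real.sqrt d := by
  rw [dftCoeff, sum_div]
  refine sum_congr rfl fun i _ => ?_
  rw [fourierVec, map_div₀, map_pow, conj_dftOmega, conj_ofReal]
  ring

theorem prime_dft_complete_incompatibility_general (d : ℕ) (hp : d.Prime)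
    (S T : Finset (Fin d)) (hST : S.card + T.card ≤ d)
    (ψ : Fin d → ℂ)
    (hA : ∀ i : Fin d, i ∉ S → ψ i = 0)
    (hB : ∀ j : Fin d, j ∉ T → dftCoeff d ψ j = 0) :
    ψ = 0 := by
  have hω : IsPrimitiveRoot (dftOmega d) d := isPrimitiveRoot_exp d hp.ne_zero
  have hsqrt : (Real.sqrt d : ℂ) ≠ 0 := by
    exact_mod_cast (Real.sqrt_pos.2 (by exact_mod_cast hp.pos)).ne'
  refine hω.inv.eq_zero_of_sum_pow_mul_eq_zero hp (T := Tᶜ)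
    (by rw [card_compl, Fintype.card_fin]; omega) hA fun j hj => ?_
  have h := hB j (mem_compl.1 hj)
  rwa [dftCoeff_eq, div_eq_zero_iff, or_iff_left hsqrt] at h

/-- Complete incompatibility of the standard and Fourier bases for prime d:
if `|S| + |T| ≤ d` then the only vector with standard-basis support in `S` and
Fourier support in `T` is zero. -/
theorem prime_dft_complete_incompatibility (d : ℕ) (hd : 2 ≤ d) (hp : d.Prime)
    (S T : Finset (Fin d)) (hST : S.card + T.card ≤ d)
    (ψ : Fin d → ℂ)
    (hA : ∀ i : Fin d, i ∉ S → ψ i = 0)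
    (hB : ∀ j : Fin d, j ∉ T → dftCoeff d ψ j = 0) :
    ψ = 0 :=
  prime_dft_complete_incompatibility_general d hp S T hST ψ hA hB
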